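/- Let X be a real random variable and (cₙ) positive reals with cₙ/√n nondecreasing and tending to infinity. If ∑ₙ P(|X| ≥ cₙ) < ∞, then E[X² 1{|X| ≤ cₙ}] = o(cₙ²/n) as n → ∞. -/

import Mathlib

/-!
Dominated convergence. Let `f n = n X² 1{|X| ≤ c n} / (c n)²`; pointwise `f n → 0` because
`n / (c n)² → 0`. If `|X| ≤ c n` and `m ≤ n` is the first index `≥ 1` with `|X| ≤ c m`, then
`(c k)² / k` is nondecreasing, so `f n ≤ n (c m)² / (c n)² ≤ m ≤ 1 + #{j | c j ≤ |X|}`, and this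
dominating count has expectation `1 + ∑ P(|X| ≥ c j) < ∞`.
-/

open MeasureTheory ProbabilityTheory Filter Set
open scoped ProbabilityTheory ENNReal Topology Finset

theorem sq_div_le_sq_div_of_div_sqrt_le {a b x y : ℝ} (ha : 0 ≤ a) (hx : 0 ≤ x) (hy : 0 ≤ y)
    (h : a / √x ≤ b / √y) : a ^ 2 / x ≤ b ^ 2 / y := by
  have := pow_le_pow_left₀ (by positivity) h 2
  rwa [div_pow, div_pow, Real.sq_sqrt hx, Real.sq_sqrt hy] at this

theorem tendsto_div_sq_of_tendsto_div_sqrt {ι : Type*} {l : Filter ι} {x c : ι → ℝ}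
    (hx : ∀ i, 0 ≤ x i) (h : Tendsto (fun i => c i / √(x i)) l atTop) :
    Tendsto (fun i => x i / c i ^ 2) l (𝓝 0) := by
  have := h.inv_tendsto_atTop.pow 2
  rw [zero_pow two_ne_zero] at this
  refine this.congr fun i => ?_
  rw [Pi.inv_apply, inv_div, div_pow, Real.sq_sqrt (hx i)]

theorem tendsto_integral_of_enorm_le_of_lintegral_ne_top {Ω E : Type*} [NormedAddCommGroup E]
    [NormedSpace ℝ E] {m : MeasurableSpace Ω} {μ : Measure Ω} {F : ℕ → Ω → E} {f : Ω → E}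
    (g : Ω → ℝ≥0∞) (hF : ∀ n, AEStronglyMeasurable (F n) μ) (hg : AEMeasurable g μ)
    (hg_fin : ∫⁻ ω, g ω ∂μ ≠ ∞) (h_bound : ∀ n, ∀ᵐ ω ∂μ, ‖F n ω‖ₑ ≤ g ω)
    (h_lim : ∀ᵐ ω ∂μ, Tendsto (fun n => F n ω) atTop (𝓝 (f ω))) :
    Tendsto (fun n => ∫ ω, F n ω ∂μ) atTop (𝓝 (∫ ω, f ω ∂μ)) := by
  refine tendsto_integral_of_dominated_convergence (fun ω => (g ω).toReal) hF
    (integrable_toReal_of_lintegral_ne_top hg hg_fin) (fun n => ?_) h_lim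
  filter_upwards [h_bound n, ae_lt_top' hg hg_fin] with ω hFg hg_lt
  rw [← toReal_enorm]
  exact ENNReal.toReal_mono hg_lt.ne hFg

theorem lintegral_tsum_indicator_one_ne_top {Ω : Type*} {m : MeasurableSpace Ω} {μ : Measure Ω}
    [IsFiniteMeasure μ] {s : ℕ → Set Ω} (hs : ∀ j, MeasurableSet (s j))
    (hsum : Summable fun j => (μ (s j)).toReal) :
    ∫⁻ ω, ∑' j, (s j).indicator 1 ω ∂μ ≠ ∞ := by
  rw [lintegral_tsum fun j => (measurable_one.indicator (hs j)).aemeasurable]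
  simp_rw [lintegral_indicator_one (hs _)]
  have : ∑' j, μ (s j) = ENNReal.ofReal (∑' j, (μ (s j)).toReal) := by
    rw [ENNReal.ofReal_tsum_of_nonneg (fun _ => ENNReal.toReal_nonneg) hsum]
    exact tsum_congr fun j => (ENNReal.ofReal_toReal (measure_ne_top μ _)).symm
  exact this ▸ ENNReal.ofReal_ne_top

theorem natCast_mul_sq_div_sq_le_one_add_card {c : ℕ → ℝ} (hcpos : ∀ n, 1 ≤ n → 0 < c n)
    (hmono : ∀ m n, 1 ≤ m → m ≤ n → c m / Real.sqrt m ≤ c n / Real.sqrt n) {t : ℝ} (ht : 0 ≤ t)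
    {n : ℕ} (htn : t ≤ c n) :
    (n : ℝ) * t ^ 2 / c n ^ 2 ≤ 1 + #{j ∈ Finset.range n | c j ≤ t} := by
  rcases Nat.eq_zero_or_pos n with rfl | hn
  · simp only [CharP.cast_eq_zero, zero_mul, zero_div]
    positivity
  have hex : ∃ m, 1 ≤ m ∧ t ≤ c m := ⟨n, hn, htn⟩
  obtain ⟨hm, htm⟩ := Nat.find_spec hex
  have hmn : Nat.find hex ≤ n := Nat.find_min' hex ⟨hn, htn⟩
  have hcard : (Nat.find hex : ℝ) ≤ 1 + #{j ∈ Finset.range n | c j ≤ t} := by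
    have hsub : Finset.Ico 1 (Nat.find hex) ⊆ {j ∈ Finset.range n | c j ≤ t} := by
      intro j hj
      rw [Finset.mem_Ico] at hj
      have hcj : c j < t := by
        have := Nat.find_min hex hj.2
        push Not at this
        exact this hj.1
      simp only [Finset.mem_filter, Finset.mem_range]
      exact ⟨by omega, hcj.le⟩
    have := Finset.card_le_card hsub
    rw [Nat.card_Ico] at this
    exact_mod_cast (by omega : Nat.find hex ≤ 1 + #{j ∈ Finset.range n | c j ≤ t})
  have hratio := sq_div_le_sq_div_of_div_sqrt_le (hcpos _ hm).le (Nat.cast_nonneg _)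
    (Nat.cast_nonneg _) (hmono _ n hm hmn)
  have hcn := hcpos n hn
  rw [div_le_div_iff₀ (by positivity) (by positivity)] at hratio
  calc (n : ℝ) * t ^ 2 / c n ^ 2 ≤ n * c (Nat.find hex) ^ 2 / c n ^ 2 := by gcongr
    _ ≤ (Nat.find hex : ℝ) := by rw [div_le_iff₀ (by positivity)]; linarith
    _ ≤ _ := hcard

theorem enorm_natCast_mul_ite_sq_div_sq_le {Ω : Type*} {c : ℕ → ℝ}
    (hcpos : ∀ n, 1 ≤ n → 0 < c n)
    (hmono : ∀ m n, 1 ≤ m → m ≤ n → c m / Real.sqrt m ≤ c n / Real.sqrt n)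
    (X : Ω → ℝ) (ω : Ω) (n : ℕ) :
    ‖(n : ℝ) * (if |X ω| ≤ c n then X ω ^ 2 else 0) / c n ^ 2‖ₑ ≤
      1 + ∑' j, {ω | c j ≤ |X ω|}.indicator 1 ω := by
  split_ifs with h
  · have hcount : (#{j ∈ Finset.range n | c j ≤ |X ω|} : ℝ≥0∞) ≤
        ∑' j, {ω | c j ≤ |X ω|}.indicator 1 ω := by
      rw [Finset.card_filter]
      push_cast
      simp only [Set.indicator_apply, Set.mem_ofPred_eq, Pi.one_apply]
      exact ENNReal.sum_le_tsum _
    rw [Real.enorm_eq_ofReal (by positivity), ← sq_abs]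
    calc ENNReal.ofReal (n * |X ω| ^ 2 / c n ^ 2)
        ≤ ENNReal.ofReal (1 + #{j ∈ Finset.range n | c j ≤ |X ω|}) :=
          ENNReal.ofReal_le_ofReal
            (natCast_mul_sq_div_sq_le_one_add_card hcpos hmono (abs_nonneg _) h)
      _ = 1 + #{j ∈ Finset.range n | c j ≤ |X ω|} := by
          rw [ENNReal.ofReal_add zero_le_one (Nat.cast_nonneg _)]
          simp
      _ ≤ _ := by gcongr
  · simp

theorem tendsto_natCast_mul_ite_sq_div_sq {c : ℕ → ℝ}
    (h : Tendsto (fun n : ℕ => (n : ℝ) / c n ^ 2) atTop (𝓝 0)) (x : ℝ) :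
    Tendsto (fun n : ℕ => (n : ℝ) * (if |x| ≤ c n then x ^ 2 else 0) / c n ^ 2) atTop (𝓝 0) := by
  refine tendsto_of_tendsto_of_tendsto_of_le_of_le tendsto_const_nhds
    (by simpa using h.mul_const (x ^ 2)) (fun n => by positivity) (fun n => ?_)
  rw [mul_div_right_comm]
  gcongr
  split_ifs
  exacts [le_rfl, sq_nonneg _]

theorem stmt_5 {Ω : Type*} [MeasureSpace Ω] [IsProbabilityMeasure (ℙ : Measure Ω)]
    (X : Ω → ℝ) (hX : Measurable X)
    (c : ℕ → ℝ) (hcpos : ∀ n, 1 ≤ n → 0 < c n)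
    (hmono : ∀ m n, 1 ≤ m → m ≤ n → c m / Real.sqrt m ≤ c n / Real.sqrt n)
    (htop : Tendsto (fun n => c n / Real.sqrt n) atTop atTop)
    (hsum : Summable (fun n => (ℙ {ω | c n ≤ |X ω|}).toReal)) :
    Tendsto (fun (n : ℕ) => (n : ℝ) * (∫ ω, (if |X ω| ≤ c n then (X ω) ^ 2 else 0)) / (c n) ^ 2)
      atTop (nhds 0) := by
  have hmeas : ∀ j, MeasurableSet {ω | c j ≤ |X ω|} := fun j =>
    measurableSet_le measurable_const hX.abs
  have hlim : ∀ ω, Tendsto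
      (fun n : ℕ => (n : ℝ) * (if |X ω| ≤ c n then X ω ^ 2 else 0) / c n ^ 2) atTop (𝓝 0) :=
    fun ω => tendsto_natCast_mul_ite_sq_div_sq
      (tendsto_div_sq_of_tendsto_div_sqrt (fun n : ℕ => Nat.cast_nonneg n) htop) (X ω)
  have hfin : ∫⁻ ω, 1 + ∑' j, {ω | c j ≤ |X ω|}.indicator 1 ω ≠ ∞ := by
    rw [lintegral_add_left measurable_const]
    exact ENNReal.add_ne_top.2 ⟨by simp, lintegral_tsum_indicator_one_ne_top hmeas hsum⟩
  have hdct := tendsto_integral_of_enorm_le_of_lintegral_ne_top _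
    (fun n => (((hX.pow_const 2).ite (measurableSet_le hX.abs measurable_const)
      measurable_const).const_mul _ |>.div_const _).aestronglyMeasurable)
    (measurable_const.add (.tsum fun j => measurable_one.indicator (hmeas j))).aemeasurable
    hfin (fun n => ae_of_all _ (enorm_natCast_mul_ite_sq_div_sq_le hcpos hmono X · n))
    (ae_of_all _ hlim)
  simpa only [integral_zero, integral_div, integral_const_mul] using hdct
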